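/- Let $\chi$ be a nonnegative Borel measure on $[0,\infty)$ and $\mathsf{q}(x) = \chi([0,x))$. Then $\lim_{x\to\infty} x\,\chi([x,\infty)) = 0$ if and only if there exists $c \in [0,\infty)$ with $\lim_{x\to\infty} x \int_x^\infty |\mathsf{q}(t) - c|^2\,dt = 0$. -/

import Mathlib

open MeasureTheory Set Filter Topology

/-!
Take `c = χ([0,∞))`, so that `f t = c - q t = χ([t,∞))` is nonincreasing and nonnegative.
If `t f(t) ≤ ε` for all `t > x`, then `x ∫_x^∞ f² ≤ ε² x ∫_x^∞ t⁻² dt = ε²`; conversely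
monotonicity gives `x f(2x)² ≤ ∫_x^{2x} f² ≤ ∫_x^∞ f²`. Square integrability of the monotone
function `q - c` near infinity forces `q → c`, so `χ([0,∞))` is the only possible constant.
-/

section TailIntegral

variable {f : ℝ → ℝ} {x C : ℝ}

lemma sq_le_mul_rpow_neg_two_of_mul_le {a t : ℝ} (ht : 0 < t) (ha : 0 ≤ a) (h : t * a ≤ C) :
    a ^ 2 ≤ C ^ 2 * t ^ (-2 : ℝ) := by
  have hle : a ≤ C / t := by rw [le_div_iff₀ ht]; linarith
  calc a ^ 2 ≤ (C / t) ^ 2 := pow_le_pow_left₀ ha hle 2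
    _ = C ^ 2 * t ^ (-2 : ℝ) := by
      rw [Real.rpow_neg ht.le, Real.rpow_two, div_pow, div_eq_mul_inv]

lemma integrableOn_Ioi_sq_of_mul_le (hf : AEStronglyMeasurable f (volume.restrict (Ioi x)))
    (hf0 : 0 ≤ f) (hx : 0 < x) (hC : ∀ t ∈ Ioi x, t * f t ≤ C) :
    IntegrableOn (fun t => f t ^ 2) (Ioi x) := by
  refine ((integrableOn_Ioi_rpow_of_lt (a := -2) (by norm_num) hx).const_mul (C ^ 2)).mono'
    (hf.pow 2) ?_
  filter_upwards [ae_restrict_mem measurableSet_Ioi] with t ht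
  rw [Real.norm_of_nonneg (by positivity)]
  exact sq_le_mul_rpow_neg_two_of_mul_le (hx.trans ht) (hf0 t) (hC t ht)

lemma mul_integral_Ioi_sq_le (hf0 : 0 ≤ f) (hx : 0 < x) (hC : ∀ t ∈ Ioi x, t * f t ≤ C) :
    x * ∫ t in Ioi x, f t ^ 2 ≤ C ^ 2 := by
  have hle : ∫ t in Ioi x, f t ^ 2 ≤ ∫ t in Ioi x, C ^ 2 * t ^ (-2 : ℝ) := by
    refine integral_mono_of_nonneg (Eventually.of_forall fun t => by positivity)
      ((integrableOn_Ioi_rpow_of_lt (by norm_num) hx).const_mul _) ?_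
    filter_upwards [ae_restrict_mem measurableSet_Ioi] with t ht
    exact sq_le_mul_rpow_neg_two_of_mul_le (hx.trans ht) (hf0 t) (hC t ht)
  calc x * ∫ t in Ioi x, f t ^ 2 ≤ x * ∫ t in Ioi x, C ^ 2 * t ^ (-2 : ℝ) := by gcongr
    _ = C ^ 2 := by
      rw [integral_const_mul, integral_Ioi_rpow_of_lt (by norm_num) hx]
      norm_num [Real.rpow_neg_one]
      field_simp

lemma tendsto_mul_integral_Ioi_sq_of_tendsto_mul (hf0 : 0 ≤ f)
    (h : Tendsto (fun t => t * f t) atTop (𝓝 0)) :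
    Tendsto (fun x => x * ∫ t in Ioi x, f t ^ 2) atTop (𝓝 0) := by
  refine tendsto_order.2 ⟨fun a ha => ?_, fun u hu => ?_⟩
  · filter_upwards [eventually_ge_atTop 0] with x hx
    exact ha.trans_le (mul_nonneg hx (integral_nonneg fun t => by positivity))
  · obtain ⟨X, hX⟩ := eventually_atTop.1 (h.eventually_lt_const (Real.sqrt_pos.2 (half_pos hu)))
    filter_upwards [eventually_gt_atTop (max X 0)] with x hx
    calc x * ∫ t in Ioi x, f t ^ 2 ≤ √(u / 2) ^ 2 :=
          mul_integral_Ioi_sq_le hf0 ((le_max_right _ _).trans_lt hx)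
            fun t ht => (hX t ((le_max_left _ _).trans (hx.trans ht).le)).le
      _ < u := by rw [Real.sq_sqrt (by positivity)]; linarith

lemma Antitone.exists_forall_mul_le (hf : Antitone f) (hf0 : 0 ≤ f)
    (h : Tendsto (fun t => t * f t) atTop (𝓝 0)) (hx : 0 ≤ x) :
    ∃ C, ∀ t ∈ Ioi x, t * f t ≤ C := by
  obtain ⟨X, hX⟩ := eventually_atTop.1 (h.eventually_lt_const zero_lt_one)
  refine ⟨max 1 (X * f x), fun t ht => ?_⟩
  rcases le_total X t with hXt | htX
  · exact (hX t hXt).le.trans (le_max_left _ _)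
  · exact (mul_le_mul htX (hf (le_of_lt ht)) (hf0 t) ((hx.trans ht.le).trans htX)).trans
      (le_max_right _ _)

lemma Antitone.sq_mul_le_mul_integral_Ioi_sq (hf : Antitone f) (hf0 : 0 ≤ f) (hx : 0 < x)
    (hint : IntegrableOn (fun t => f t ^ 2) (Ioi x)) :
    (x * f (2 * x)) ^ 2 ≤ x * ∫ t in Ioi x, f t ^ 2 := by
  have hsub : Ioc x (2 * x) ⊆ Ioi x := Ioc_subset_Ioi_self
  calc (x * f (2 * x)) ^ 2 = x * ∫ _ in Ioc x (2 * x), f (2 * x) ^ 2 := by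
        rw [setIntegral_const, measureReal_def, Real.volume_Ioc,
          ENNReal.toReal_ofReal (by linarith), smul_eq_mul]
        ring
    _ ≤ x * ∫ t in Ioc x (2 * x), f t ^ 2 := by
        refine mul_le_mul_of_nonneg_left ?_ hx.le
        exact setIntegral_mono_on (integrableOn_const (by simp)) (hint.mono_set hsub)
          measurableSet_Ioc fun t ht => pow_le_pow_left₀ (hf0 _) (hf ht.2) 2
    _ ≤ x * ∫ t in Ioi x, f t ^ 2 := by
        refine mul_le_mul_of_nonneg_left ?_ hx.le
        exact setIntegral_mono_set hint (Eventually.of_forall fun t => by positivity)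
          (Eventually.of_forall hsub)

lemma Antitone.tendsto_mul_of_tendsto_mul_integral_Ioi_sq (hf : Antitone f) (hf0 : 0 ≤ f)
    (hint : ∀ x, 0 < x → IntegrableOn (fun t => f t ^ 2) (Ioi x))
    (h : Tendsto (fun x => x * ∫ t in Ioi x, f t ^ 2) atTop (𝓝 0)) :
    Tendsto (fun t => t * f t) atTop (𝓝 0) := by
  have hhalf : Tendsto (fun x => x * f (2 * x)) atTop (𝓝 0) := by
    refine squeeze_zero' ?_ ?_ (by simpa using h.sqrt)
    · filter_upwards [eventually_ge_atTop 0] with x hx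
      exact mul_nonneg hx (hf0 _)
    · filter_upwards [eventually_gt_atTop 0] with x hx
      exact (le_abs_self _).trans
        (Real.abs_le_sqrt (hf.sq_mul_le_mul_integral_Ioi_sq hf0 hx (hint x hx)))
  have := (hhalf.comp (tendsto_id.atTop_div_const two_pos)).const_mul 2
  rw [mul_zero] at this
  refine this.congr fun t => ?_
  simp only [Function.comp_apply, id, mul_div_cancel₀ t two_ne_zero]
  ring

theorem Antitone.tendsto_mul_zero_iff_tendsto_mul_integral_Ioi_sq (hf : Antitone f)
    (hf0 : 0 ≤ f) :
    Tendsto (fun t => t * f t) atTop (𝓝 0) ↔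
      (∀ x, 0 < x → IntegrableOn (fun t => f t ^ 2) (Ioi x)) ∧
        Tendsto (fun x => x * ∫ t in Ioi x, f t ^ 2) atTop (𝓝 0) := by
  refine ⟨fun h => ⟨fun x hx => ?_, tendsto_mul_integral_Ioi_sq_of_tendsto_mul hf0 h⟩,
    fun ⟨hint, h⟩ => hf.tendsto_mul_of_tendsto_mul_integral_Ioi_sq hf0 hint h⟩
  obtain ⟨C, hC⟩ := hf.exists_forall_mul_le hf0 h hx.le
  exact integrableOn_Ioi_sq_of_mul_le hf.measurable.aestronglyMeasurable hf0 hx hC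

lemma not_integrableOn_Ioi_of_eventually_le {g : ℝ → ℝ} {a ε : ℝ} (hε : 0 < ε)
    (hg : ∀ᶠ t in atTop, ε ≤ g t) : ¬IntegrableOn g (Ioi a) := by
  intro hint
  obtain ⟨X, hX⟩ := eventually_atTop.1 hg
  have hconst : IntegrableOn (fun _ => ε) (Ioi (max a X)) := by
    refine (hint.mono_set (Ioi_subset_Ioi (le_max_left _ _))).mono' aestronglyMeasurable_const ?_
    filter_upwards [ae_restrict_mem measurableSet_Ioi] with t ht
    rw [Real.norm_of_nonneg hε.le]
    exact hX t ((le_max_right _ _).trans ht.le)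
  rw [IntegrableOn, integrable_const_iff_isFiniteMeasure hε.ne'] at hconst
  simpa [Real.volume_Ioi] using hconst.measure_univ_lt_top

lemma Monotone.tendsto_of_integrableOn_Ioi_sq_sub {q : ℝ → ℝ} {a c : ℝ} (hq : Monotone q)
    (hint : IntegrableOn (fun t => |q t - c| ^ 2) (Ioi a)) : Tendsto q atTop (𝓝 c) := by
  refine tendsto_order.2 ⟨fun l hl => ?_, fun u hu => ?_⟩
  · by_contra hev
    have hle : ∀ t, q t ≤ l := fun t => by
      obtain ⟨s, hts, hs⟩ := frequently_atTop.1 (not_eventually.1 hev) t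
      exact (hq hts).trans (not_lt.1 hs)
    refine not_integrableOn_Ioi_of_eventually_le (pow_pos (sub_pos.2 hl) 2)
      (Eventually.of_forall fun t => ?_) hint
    rw [abs_sub_comm]
    have hgap : c - l ≤ c - q t := by linarith [hle t]
    exact pow_le_pow_left₀ (sub_pos.2 hl).le (hgap.trans (le_abs_self _)) 2
  · by_contra hev
    obtain ⟨s, hs⟩ := (not_eventually.1 hev).exists
    refine not_integrableOn_Ioi_of_eventually_le (pow_pos (sub_pos.2 hu) 2) ?_ hint
    filter_upwards [eventually_ge_atTop s] with t ht
    have hgap : u - c ≤ q t - c := by linarith [hq ht, not_lt.1 hs]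
    exact pow_le_pow_left₀ (sub_pos.2 hu).le (hgap.trans (le_abs_self _)) 2

end TailIntegral

section Measure

variable {μ : Measure ℝ}

lemma measure_Ico_add_measure_Ici {a x : ℝ} (hx : a ≤ x) :
    μ (Ico a x) + μ (Ici x) = μ (Ici a) := by
  rw [← Ico_union_Ici_eq_Ici hx]
  exact (measure_union ((Iio_disjoint_Ici le_rfl).mono_left Ico_subset_Iio_self)
    measurableSet_Ici).symm

lemma toReal_measure_Ici_sub_toReal_measure_Ico {a x : ℝ} (hfin : μ (Ici a) ≠ ⊤) (hx : a ≤ x) :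
    (μ (Ici a)).toReal - (μ (Ico a x)).toReal = (μ (Ici x)).toReal := by
  rw [← measure_Ico_add_measure_Ici hx] at hfin ⊢
  rw [ENNReal.toReal_add (ENNReal.add_ne_top.1 hfin).1 (ENNReal.add_ne_top.1 hfin).2]
  ring

lemma measure_Ici_zero_ne_top_of_tendsto (hlocfin : ∀ x : ℝ, μ (Ico 0 x) < ⊤)
    (h : Tendsto (fun x => ENNReal.ofReal x * μ (Ici x)) atTop (𝓝 0)) : μ (Ici 0) ≠ ⊤ := by
  obtain ⟨x, hx1, hx⟩ := ((eventually_ge_atTop 1).and (h.eventually_lt_const zero_lt_one)).exists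
  have htail : μ (Ici x) < ⊤ :=
    calc μ (Ici x) ≤ ENNReal.ofReal x * μ (Ici x) :=
          le_mul_of_one_le_left' (ENNReal.one_le_ofReal.2 hx1)
      _ < 1 := hx
      _ < ⊤ := ENNReal.one_lt_top
  rw [← measure_Ico_add_measure_Ici (zero_le_one.trans hx1)]
  exact ENNReal.add_ne_top.2 ⟨(hlocfin x).ne, htail.ne⟩

lemma tendsto_ofReal_mul_measure_Ici_iff (hfin : μ (Ici 0) ≠ ⊤) :
    Tendsto (fun x => ENNReal.ofReal x * μ (Ici x)) atTop (𝓝 0) ↔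
      (∀ x, 0 < x →
        IntegrableOn (fun t => |(μ (Ico 0 t)).toReal - (μ (Ici 0)).toReal| ^ 2) (Ioi x)) ∧
      Tendsto (fun x => x * ∫ t in Ioi x, |(μ (Ico 0 t)).toReal - (μ (Ici 0)).toReal| ^ 2)
        atTop (𝓝 0) := by
  have hIco : ∀ t, μ (Ico 0 t) ≠ ⊤ := fun t =>
    ne_top_of_le_ne_top hfin (measure_mono Ico_subset_Ici_self)
  have hf : Antitone fun t => (μ (Ici 0)).toReal - (μ (Ico 0 t)).toReal := fun s t hst =>
    sub_le_sub_left (ENNReal.toReal_mono (hIco t) (measure_mono (Ico_subset_Ico_right hst))) _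
  have hf0 : 0 ≤ fun t => (μ (Ici 0)).toReal - (μ (Ico 0 t)).toReal := fun t =>
    sub_nonneg.2 (ENNReal.toReal_mono hfin (measure_mono Ico_subset_Ici_self))
  simp_rw [abs_sub_comm _ (μ (Ici 0)).toReal, sq_abs]
  have hne : ∀ x : ℝ, ENNReal.ofReal x * μ (Ici x) ≠ ⊤ := fun x => by
    rcases le_total x 0 with hx | hx
    · simp [ENNReal.ofReal_of_nonpos hx]
    · exact ENNReal.mul_ne_top ENNReal.ofReal_ne_top
        (ne_top_of_le_ne_top hfin (measure_mono (Ici_subset_Ici.2 hx)))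
  rw [← hf.tendsto_mul_zero_iff_tendsto_mul_integral_Ioi_sq hf0,
    ← ENNReal.tendsto_toReal_iff hne ENNReal.zero_ne_top, ENNReal.toReal_zero]
  refine tendsto_congr' ?_
  filter_upwards [eventually_ge_atTop 0] with x hx
  rw [ENNReal.toReal_mul, ENNReal.toReal_ofReal hx,
    toReal_measure_Ici_sub_toReal_measure_Ico hfin hx]

lemma measure_Ici_zero_eq_ofReal_of_integrableOn (hlocfin : ∀ x : ℝ, μ (Ico 0 x) < ⊤)
    {a c : ℝ} (hint : IntegrableOn (fun t => |(μ (Ico 0 t)).toReal - c| ^ 2) (Ioi a)) :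
    μ (Ici 0) = ENNReal.ofReal c := by
  have hq : Monotone fun t => (μ (Ico 0 t)).toReal := fun s t hst =>
    ENNReal.toReal_mono (hlocfin t).ne (measure_mono (Ico_subset_Ico_right hst))
  refine tendsto_nhds_unique (tendsto_measure_Ico_atTop μ 0) ?_
  exact (ENNReal.tendsto_ofReal (hq.tendsto_of_integrableOn_Ioi_sq_sub hint)).congr fun t =>
    ENNReal.ofReal_toReal (hlocfin t).ne

end Measure

theorem stmt_9_general (μ : Measure ℝ)
    (hlocfin : ∀ x : ℝ, μ (Set.Ico (0 : ℝ) x) < ⊤) :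
    Filter.Tendsto (fun x : ℝ => ENNReal.ofReal x * μ (Set.Ici x))
        Filter.atTop (nhds 0) ↔
      ∃ c : ℝ, 0 ≤ c ∧
        (∀ x : ℝ, 0 < x →
          IntegrableOn
            (fun t : ℝ => |(μ (Set.Ico (0 : ℝ) t)).toReal - c| ^ 2)
            (Set.Ioi x)) ∧
        Filter.Tendsto
          (fun x : ℝ =>
            x * ∫ t in Set.Ioi x, |(μ (Set.Ico (0 : ℝ) t)).toReal - c| ^ 2)
          Filter.atTop (nhds 0) := by
  constructor
  · intro h
    have hfin := measure_Ici_zero_ne_top_of_tendsto hlocfin h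
    exact ⟨_, ENNReal.toReal_nonneg, (tendsto_ofReal_mul_measure_Ici_iff hfin).1 h⟩
  · rintro ⟨c, hc, hint, htend⟩
    have hμ := measure_Ici_zero_eq_ofReal_of_integrableOn hlocfin (hint 1 one_pos)
    have hfin : μ (Ici 0) ≠ ⊤ := hμ ▸ ENNReal.ofReal_ne_top
    have hμc : (μ (Ici 0)).toReal = c := by rw [hμ, ENNReal.toReal_ofReal hc]
    exact (tendsto_ofReal_mul_measure_Ici_iff hfin).2 (hμc ▸ ⟨hint, htend⟩)

/-- Let `χ` be a (locally finite) nonnegative Borel measure on `[0,∞)` and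
`q(x) = χ([0,x))`.  Then `x χ([x,∞)) → 0` as `x → ∞` if and only if there is a
constant `c ≥ 0` such that `x ∫_x^∞ |q(t) - c|² dt → 0` as `x → ∞` (the tail
integrals being finite). -/
theorem stmt_9 (μ : Measure ℝ) (hneg : μ (Set.Iio (0 : ℝ)) = 0)
    (hlocfin : ∀ x : ℝ, μ (Set.Ico (0 : ℝ) x) < ⊤) :
    Filter.Tendsto (fun x : ℝ => ENNReal.ofReal x * μ (Set.Ici x))
        Filter.atTop (nhds 0) ↔
      ∃ c : ℝ, 0 ≤ c ∧
        (∀ x : ℝ, 0 < x →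
          IntegrableOn
            (fun t : ℝ => |(μ (Set.Ico (0 : ℝ) t)).toReal - c| ^ 2)
            (Set.Ioi x)) ∧
        Filter.Tendsto
          (fun x : ℝ =>
            x * ∫ t in Set.Ioi x, |(μ (Set.Ico (0 : ℝ) t)).toReal - c| ^ 2)
          Filter.atTop (nhds 0) :=
  stmt_9_general μ hlocfin
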